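/- arXiv:1612.09544 — 4 statements merged into one kernel-verified Lean document; each statement's English description precedes it below -/
import Mathlib

section
/- Let $\lambda > 0$ and let $u, v$ be real numbers with $w := \max\{|u|,|v|\}$ satisfying $w^4 < \lambda$. Let $\pi_\lambda(t) := \exp(-\lambda(1 - \cos(t/\sqrt{\lambda})))$. Then $|\pi_\lambda(v) - e^{-v^2/2}| \le C\, e^{-v^2/2}\, v^4 / \lambda$ for an absolute constant $C$. -/
/-!
Write `π_λ(v) = exp (-(v²/2 - δ))` with `δ = v²/2 - λ(1 - cos (v/√λ))`. The Taylor bounds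
`1 - x²/2 ≤ cos x ≤ 1 - x²/2 + x⁴/24` at `x = v/√λ` give `0 ≤ δ ≤ v⁴/(24λ)`, which is at most
`1/24` because `v⁴ < λ`. Then `|π_λ(v) - e^{-v²/2}| = e^{-v²/2} |e^δ - 1| ≤ 2 e^{-v²/2} δ`,
so the theorem holds with `C = 1`.
-/

open Real Set

theorem Real.cos_le_one_sub_sq_div_two_add_pow_four_div (x : ℝ) :
    cos x ≤ 1 - x ^ 2 / 2 + x ^ 4 / 24 := by
  wlog hx : 0 ≤ x
  · simpa [Even.neg_pow (by decide : Even 4)] using this (-x) (by linarith)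
  let f (t : ℝ) : ℝ := 1 - t ^ 2 / 2 + t ^ 4 / 24 - cos t
  have hderiv (t : ℝ) : deriv f t = sin t - (t - t ^ 3 / 6) := by
    simp (disch := fun_prop) [f]
    ring
  have hmono : MonotoneOn f (Ici 0) := by
    apply monotoneOn_of_deriv_nonneg (convex_Ici 0) (by fun_prop) (by fun_prop)
    grind [sin_ge_sub_cube, interior_Ici]
  have h0 : f 0 ≤ f x := hmono (by simp) hx hx
  grind [cos_zero]

theorem mul_one_sub_cos_div_sqrt_mem_Icc {lam : ℝ} (hlam : 0 < lam) (v : ℝ) :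
    lam * (1 - cos (v / √lam)) ∈ Icc (v ^ 2 / 2 - v ^ 4 / (24 * lam)) (v ^ 2 / 2) := by
  set x := v / √lam
  have hx2 : lam * x ^ 2 = v ^ 2 := by
    rw [div_pow, sq_sqrt hlam.le]
    field_simp
  have hx4 : lam * x ^ 4 = v ^ 4 / lam := by
    rw [show x ^ 4 = (x ^ 2) ^ 2 by ring, div_pow, sq_sqrt hlam.le]
    field_simp
  have hlower := one_sub_sq_div_two_le_cos (x := x)
  have hupper := cos_le_one_sub_sq_div_two_add_pow_four_div x
  constructor
  · have := mul_le_mul_of_nonneg_left hupper hlam.le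
    rw [show v ^ 4 / (24 * lam) = lam * x ^ 4 / 24 by rw [hx4]; ring]
    nlinarith
  · nlinarith

theorem abs_exp_neg_sub_exp_neg_le {a b : ℝ} (h : |b - a| ≤ 1) :
    |exp (-a) - exp (-b)| ≤ 2 * exp (-b) * |b - a| := by
  have hsplit : exp (-a) - exp (-b) = exp (-b) * (exp (b - a) - 1) := by
    rw [mul_sub, ← exp_add]
    ring_nf
  rw [hsplit, abs_mul, abs_of_pos (exp_pos _), mul_comm 2, mul_assoc]
  exact mul_le_mul_of_nonneg_left (abs_exp_sub_one_le h) (exp_pos _).le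

/-- If `w := max{|u|,|v|}` satisfies `w⁴ < λ`, then the Poisson characteristic function
modulus `π_λ(v) = exp(-λ(1 - cos(v/√λ)))` is within `C e^{-v²/2} v⁴/λ` of the Gaussian
characteristic function `e^{-v²/2}`. -/
theorem stmt4 : ∃ C : ℝ, 0 < C ∧ ∀ lam u v : ℝ, 0 < lam →
    (max |u| |v|) ^ 4 < lam →
    |Real.exp (-(lam * (1 - Real.cos (v / Real.sqrt lam)))) - Real.exp (-(v ^ 2) / 2)|
      ≤ C * Real.exp (-(v ^ 2) / 2) * v ^ 4 / lam := by
  refine ⟨1, one_pos, fun lam u v hlam hw => ?_⟩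
  have hv4 : v ^ 4 < lam := by
    have := pow_le_pow_left₀ (abs_nonneg v) (le_max_right |u| |v|) 4
    rw [Even.pow_abs ⟨2, rfl⟩] at this
    exact this.trans_lt hw
  obtain ⟨hlower, hupper⟩ := mul_one_sub_cos_div_sqrt_mem_Icc hlam v
  have hgap : v ^ 4 / (24 * lam) ≤ 1 / 24 := by
    rw [div_le_div_iff₀ (by positivity) (by norm_num)]
    linarith
  have hδ : |v ^ 2 / 2 - lam * (1 - cos (v / √lam))| ≤ v ^ 4 / (24 * lam) := by
    rw [abs_of_nonneg (by linarith)]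
    linarith
  have hclose := abs_exp_neg_sub_exp_neg_le (hδ.trans (by linarith))
  rw [neg_div]
  calc _ ≤ 2 * exp (-(v ^ 2 / 2)) * (v ^ 4 / (24 * lam)) :=
        hclose.trans (mul_le_mul_of_nonneg_left hδ (by positivity))
    _ = exp (-(v ^ 2 / 2)) * v ^ 4 / (12 * lam) := by ring
    _ ≤ 1 * exp (-(v ^ 2 / 2)) * v ^ 4 / lam := by
        rw [one_mul]
        gcongr
        linarith
end

section
/- Let $\mathfrak{L} \ge 1$ and let $j$ be a real number. Then $\int_0^{2\pi \mathfrak{L}} \int_0^{2\pi \mathfrak{L}} e^{-(u-u')^2} e^{-i (j/\mathfrak{L})(u - u')} \, du \, du' = 2\pi^{3/2} e^{-j^2/(4\mathfrak{L}^2)} \mathfrak{L} + O\left(e^{j^2/(4\mathfrak{L}^2)}\right)$ with an absolute implied constant. -/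
/-!
Put `f t = e^{-t²} e^{-iat}` with `a = j/𝔏` and `T = 2π𝔏`. The inner integral is
`∫_{-u'}^{T-u'} f`, which differs from `∫_ℝ f = √π e^{-a²/4}` by two Gaussian tails, bounded by
`√(2π) e^{-u'²/2}` and `√(2π) e^{-(T-u')²/2}`. Integrating over `u' ∈ [0, T]` leaves an error of
at most `2π`, uniformly in `𝔏` and `j`, while the main term is `T ∫_ℝ f = 2π^{3/2} 𝔏 e^{-j²/(4𝔏²)}`.
-/

open MeasureTheory Set Real Complex

section Convolution

variable {E : Type*} [NormedAddCommGroup E] [NormedSpace ℝ E] {f : ℝ → E}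

theorem MeasureTheory.Integrable.continuous_intervalIntegral_comp_sub (hf : Integrable f)
    (a b : ℝ) : Continuous fun s => ∫ t in a..b, f (t - s) := by
  have h_eq : ∀ s, ∫ t in a..b, f (t - s) = (∫ t in 0..b - s, f t) - ∫ t in 0..a - s, f t :=
    fun s => by
      rw [intervalIntegral.integral_comp_sub_right,
        intervalIntegral.integral_interval_sub_left hf.intervalIntegrable hf.intervalIntegrable]
  simp_rw [h_eq]
  exact ((hf.continuous_primitive 0).comp (by fun_prop)).sub
    ((hf.continuous_primitive 0).comp (by fun_prop))

theorem norm_intervalIntegral_sub_integral_le (hf : Integrable f) (a b : ℝ) :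
    ‖(∫ t in a..b, f t) - ∫ t, f t‖ ≤ (∫ t in Iic a, ‖f t‖) + ∫ t in Ioi b, ‖f t‖ := by
  rw [← intervalIntegral.integral_Iic_sub_Iic hf.integrableOn hf.integrableOn,
    ← intervalIntegral.integral_Iic_add_Ioi hf.integrableOn hf.integrableOn,
    show ∀ x y z : E, x - y - (x + z) = -y - z from fun x y z => by abel]
  refine (norm_sub_le _ _).trans ?_
  rw [norm_neg]
  gcongr <;> exact norm_integral_le_integral_norm _

theorem norm_integral_integral_comp_sub_sub_le [CompleteSpace E] (hf : Integrable f) {T : ℝ}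
    (hT : 0 ≤ T) {h : ℝ → ℝ} (hh : IntervalIntegrable h volume 0 T)
    (h_left : ∀ x ∈ Icc 0 T, ∫ t in Iic (-x), ‖f t‖ ≤ h x)
    (h_right : ∀ x ∈ Icc 0 T, ∫ t in Ioi x, ‖f t‖ ≤ h x) :
    ‖(∫ s in 0..T, ∫ t in 0..T, f (t - s)) - T • ∫ t, f t‖ ≤ 2 * ∫ x in 0..T, h x := by
  have h_pointwise : ∀ s ∈ Ioc 0 T,
      ‖(∫ t in 0..T, f (t - s)) - ∫ t, f t‖ ≤ h s + h (T - s) := by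
    intro s hs
    rw [intervalIntegral.integral_comp_sub_right, zero_sub]
    exact (norm_intervalIntegral_sub_integral_le hf _ _).trans <| add_le_add
      (h_left s (Ioc_subset_Icc_self hs))
      (h_right _ ⟨sub_nonneg.2 hs.2, sub_le_self _ hs.1.le⟩)
  have hh' : IntervalIntegrable (fun s => h (T - s)) volume 0 T := by
    simpa using hh.symm.comp_sub_left T
  calc ‖(∫ s in 0..T, ∫ t in 0..T, f (t - s)) - T • ∫ t, f t‖
      = ‖∫ s in 0..T, ((∫ t in 0..T, f (t - s)) - ∫ t, f t)‖ := by
        rw [intervalIntegral.integral_sub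
          ((hf.continuous_intervalIntegral_comp_sub 0 T).intervalIntegrable 0 T)
          intervalIntegrable_const, intervalIntegral.integral_const, sub_zero]
    _ ≤ ∫ s in 0..T, (h s + h (T - s)) :=
        intervalIntegral.norm_integral_le_of_norm_le hT (ae_of_all _ h_pointwise) (hh.add hh')
    _ = 2 * ∫ x in 0..T, h x := by
        rw [intervalIntegral.integral_add hh hh', intervalIntegral.integral_comp_sub_left,
          sub_self, sub_zero]
        ring

end Convolution

theorem integral_exp_neg_sq_div_two : ∫ t : ℝ, rexp (-t ^ 2 / 2) = √(2 * π) := by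
  have h_eq : (fun t : ℝ => rexp (-t ^ 2 / 2)) = fun t => rexp (-2⁻¹ * t ^ 2) := by
    ext t; ring_nf
  rw [h_eq, integral_gaussian, div_inv_eq_mul, mul_comm]

theorem setIntegral_exp_neg_sq_le {s : Set ℝ} (hs : MeasurableSet s) {x : ℝ}
    (hx : ∀ t ∈ s, x ^ 2 ≤ t ^ 2) :
    ∫ t in s, rexp (-t ^ 2) ≤ √(2 * π) * rexp (-x ^ 2 / 2) := by
  have h_half : Integrable fun t : ℝ => rexp (-t ^ 2 / 2) := by
    simpa [neg_div, div_eq_inv_mul] using integrable_exp_neg_mul_sq (b := 2⁻¹) (by norm_num)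
  calc ∫ t in s, rexp (-t ^ 2)
      ≤ ∫ t in s, rexp (-x ^ 2 / 2) * rexp (-t ^ 2 / 2) := by
        refine setIntegral_mono_on ?_ (h_half.integrableOn.const_mul _) hs fun t ht => ?_
        · simpa using (integrable_exp_neg_mul_sq one_pos).integrableOn
        · rw [← Real.exp_add, Real.exp_le_exp]
          linarith [hx t ht]
    _ = rexp (-x ^ 2 / 2) * ∫ t in s, rexp (-t ^ 2 / 2) := integral_const_mul _ _
    _ ≤ rexp (-x ^ 2 / 2) * ∫ t, rexp (-t ^ 2 / 2) :=
        mul_le_mul_of_nonneg_left (setIntegral_le_integral h_half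
          (ae_of_all _ fun t => (Real.exp_pos _).le)) (Real.exp_pos _).le
    _ = √(2 * π) * rexp (-x ^ 2 / 2) := by rw [integral_exp_neg_sq_div_two, mul_comm]

theorem intervalIntegral_exp_neg_sq_div_two_le {T : ℝ} (hT : 0 ≤ T) :
    ∫ x in 0..T, rexp (-x ^ 2 / 2) ≤ √(2 * π) / 2 := by
  have h_eq : (fun t : ℝ => rexp (-t ^ 2 / 2)) = fun t => rexp (-2⁻¹ * t ^ 2) := by
    ext t; ring_nf
  rw [intervalIntegral.integral_of_le hT, h_eq, show 2 * π = π / 2⁻¹ by ring,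
    ← integral_gaussian_Ioi]
  exact setIntegral_mono_set (integrable_exp_neg_mul_sq (by norm_num)).integrableOn
    (ae_of_all _ fun t => (Real.exp_pos _).le) Ioc_subset_Ioi_self.eventuallyLE

theorem integral_cexp_neg_sq_mul_cexp (a : ℝ) :
    ∫ t : ℝ, cexp (-((t ^ 2 : ℝ) : ℂ)) * cexp (-(I * a * t))
      = ((√π * rexp (-a ^ 2 / 4) : ℝ) : ℂ) := by
  have h_eq : (fun t : ℝ => cexp (-((t ^ 2 : ℝ) : ℂ)) * cexp (-(I * a * t)))
      = fun t : ℝ => cexp (I * (-a : ℂ) * t) * cexp (-1 * t ^ 2) := by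
    ext t; push_cast; ring_nf
  rw [h_eq, fourierIntegral_gaussian (by norm_num), div_one, neg_sq, mul_one, Real.sqrt_eq_rpow,
    Complex.ofReal_mul, Complex.ofReal_cpow pi_pos.le, Complex.ofReal_exp]
  push_cast
  ring_nf

theorem norm_cexp_neg_sq_mul_cexp (a t : ℝ) :
    ‖cexp (-((t ^ 2 : ℝ) : ℂ)) * cexp (-(I * a * t))‖ = rexp (-t ^ 2) := by
  simp [Complex.norm_exp]
  norm_cast

theorem integrable_cexp_neg_sq_mul_cexp (a : ℝ) :
    Integrable fun t : ℝ => cexp (-((t ^ 2 : ℝ) : ℂ)) * cexp (-(I * a * t)) := by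
  refine (integrable_exp_neg_mul_sq one_pos).mono' (by fun_prop) (ae_of_all _ fun t => ?_)
  rw [norm_cexp_neg_sq_mul_cexp, neg_one_mul]

/-- For `𝔏 ≥ 1` and real `j`,
`∫₀^{2π𝔏}∫₀^{2π𝔏} e^{-(u-u')²} e^{-i(j/𝔏)(u-u')} du du'
  = 2π^{3/2} e^{-j²/(4𝔏²)} 𝔏 + O(e^{j²/(4𝔏²)})` with an absolute implied constant. -/
theorem stmt8 : ∃ C : ℝ, 0 < C ∧ ∀ L j : ℝ, 1 ≤ L →
    ‖(∫ u' in (0:ℝ)..(2 * Real.pi * L), ∫ u in (0:ℝ)..(2 * Real.pi * L),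
        Complex.exp (-(((u - u') ^ 2 : ℝ) : ℂ)) *
          Complex.exp (-(Complex.I * ((j / L : ℝ) : ℂ) * (((u - u' : ℝ)) : ℂ))))
      - ((2 * Real.pi ^ ((3 : ℝ) / 2) * Real.exp (-(j ^ 2) / (4 * L ^ 2)) * L : ℝ) : ℂ)‖
      ≤ C * Real.exp (j ^ 2 / (4 * L ^ 2)) := by
  refine ⟨2 * π, by positivity, fun L j hL => ?_⟩
  have hT : 0 ≤ 2 * π * L := by positivity
  have h_main : ((2 * π ^ ((3 : ℝ) / 2) * rexp (-(j ^ 2) / (4 * L ^ 2)) * L : ℝ) : ℂ)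
      = (2 * π * L) • ∫ t : ℝ, cexp (-((t ^ 2 : ℝ) : ℂ)) * cexp (-(I * (j / L : ℝ) * t)) := by
    rw [integral_cexp_neg_sq_mul_cexp, Complex.real_smul, ← Complex.ofReal_mul,
      show -(j / L) ^ 2 / 4 = -j ^ 2 / (4 * L ^ 2) by ring,
      show (3 : ℝ) / 2 = 1 + 1 / 2 by norm_num, Real.rpow_add pi_pos, Real.rpow_one,
      ← Real.sqrt_eq_rpow]
    congr 1
    ring
  have h_tail : ∀ (x : ℝ) (s : Set ℝ), MeasurableSet s → (∀ t ∈ s, x ^ 2 ≤ t ^ 2) →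
      ∫ t in s, ‖cexp (-((t ^ 2 : ℝ) : ℂ)) * cexp (-(I * (j / L : ℝ) * t))‖
        ≤ √(2 * π) * rexp (-x ^ 2 / 2) := fun x s hs hx => by
    simpa only [norm_cexp_neg_sq_mul_cexp] using setIntegral_exp_neg_sq_le hs hx
  rw [h_main]
  calc _ ≤ 2 * ∫ x in 0..2 * π * L, √(2 * π) * rexp (-x ^ 2 / 2) :=
        norm_integral_integral_comp_sub_sub_le (integrable_cexp_neg_sq_mul_cexp _) hT
          ((by fun_prop : Continuous _).intervalIntegrable _ _)
          (fun x hx => h_tail x _ measurableSet_Iic fun t ht => by nlinarith [hx.1, ht.out])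
          (fun x hx => h_tail x _ measurableSet_Ioi fun t ht => by nlinarith [hx.1, ht.out])
    _ ≤ 2 * (√(2 * π) * (√(2 * π) / 2)) := by
        rw [intervalIntegral.integral_const_mul]
        gcongr
        exact intervalIntegral_exp_neg_sq_div_two_le hT
    _ = 2 * π := by rw [← mul_div_assoc, Real.mul_self_sqrt (by positivity)]; ring
    _ ≤ 2 * π * rexp (j ^ 2 / (4 * L ^ 2)) :=
        le_mul_of_one_le_right (by positivity) (Real.one_le_exp (by positivity))
end

section
/- Let $b > 0$ and $\alpha > 0$. Then $\lim_{T \to \infty} \frac{1}{2\pi i} \int_{\alpha - iT}^{\alpha + iT} b^s \frac{ds}{s}$ equals $1$ if $b > 1$, equals $1/2$ if $b = 1$, and equals $0$ if $0 < b < 1$. -/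
/-!
Write `L = log b`, so that the integral is `∫_{-T}^{T} K(α + ti) dt` with `K(s) = e^{sL} / s`.
For `L = 0` it equals `2 arctan (T / α) → π`. For `L < 0`, Cauchy's theorem on the rectangle
`[α, T] × [-T, T]` moves the line of integration to `Re s = T`, where `|K| ≤ e^{TL} / T`, while
the horizontal sides are `O(1 / T)` because `∫ e^{xL} dx` converges. For `L > 0`, `K(s) - 1/s` is
entire, so its integrals over `Re s = α` and `Re s = -α` differ by horizontal sides of size
`O(1 / T)`; the reflection `s ↦ -s` turns the line `Re s = -α` for `L` into `Re s = α` for `-L`,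
and the limit is `2π - 0`.
-/

open Complex Filter Set Topology intervalIntegral
open scoped Interval Real

noncomputable def verticalIntegral (f : ℂ → ℂ) (x T : ℝ) : ℂ :=
  ∫ t in (-T)..T, f (x + t * I)

theorem verticalIntegral_sub_verticalIntegral {f : ℂ → ℂ} {x₁ x₂ T : ℝ}
    (hf : DifferentiableOn ℂ f ([[x₁, x₂]] ×ℂ [[-T, T]])) :
    verticalIntegral f x₂ T - verticalIntegral f x₁ T =
      I * ((∫ x in x₁..x₂, f (x - T * I)) - ∫ x in x₁..x₂, f (x + T * I)) := by
  have h := integral_boundary_rect_eq_zero_of_differentiableOn f ⟨x₁, -T⟩ ⟨x₂, T⟩ hf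
  simp only [ofReal_neg, neg_mul, ← sub_eq_add_neg, smul_eq_mul] at h
  rw [← verticalIntegral, ← verticalIntegral] at h
  linear_combination (-I) * h + (verticalIntegral f x₂ T - verticalIntegral f x₁ T) * I_sq

theorem verticalIntegral_comp_neg (f : ℂ → ℂ) (x T : ℝ) :
    verticalIntegral (fun s => f (-s)) x T = verticalIntegral f (-x) T := by
  have h := integral_comp_neg (a := -T) (b := T) fun t : ℝ => f (-x + t * I)
  simp only [neg_neg] at h
  simp only [verticalIntegral, ← h, ofReal_neg]
  congr 1; ext t; ring_nf

theorem verticalIntegral_neg (f : ℂ → ℂ) (x T : ℝ) :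
    verticalIntegral (fun s => -f s) x T = -verticalIntegral f x T :=
  integral_neg

theorem ofReal_add_mul_I_ne_zero {x : ℝ} (hx : x ≠ 0) (t : ℝ) : (x : ℂ) + t * I ≠ 0 :=
  fun h => hx (by simpa using congrArg re h)

theorem intervalIntegrable_vertical {f : ℂ → ℂ} {x : ℝ} (hx : x ≠ 0)
    (hf : ContinuousOn f {0}ᶜ) (a b : ℝ) :
    IntervalIntegrable (fun t : ℝ => f (x + t * I)) MeasureTheory.volume a b :=
  (hf.comp_continuous (by fun_prop) (ofReal_add_mul_I_ne_zero hx)).intervalIntegrable a b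

theorem verticalIntegral_sub {f g : ℂ → ℂ} {x : ℝ} (hx : x ≠ 0)
    (hf : ContinuousOn f {0}ᶜ) (hg : ContinuousOn g {0}ᶜ) (T : ℝ) :
    verticalIntegral (f - g) x T = verticalIntegral f x T - verticalIntegral g x T :=
  integral_sub (intervalIntegrable_vertical hx hf _ _) (intervalIntegrable_vertical hx hg _ _)

theorem verticalIntegral_inv {x : ℝ} (hx : x ≠ 0) (T : ℝ) :
    verticalIntegral (·⁻¹) x T = 2 * Real.arctan (T / x) := by
  have hconj : verticalIntegral (·⁻¹) x T = ∫ t in (-T)..T, ((x : ℂ) - t * I)⁻¹ := by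
    rw [← neg_neg x, ← verticalIntegral_comp_neg, verticalIntegral]
    congr 1; ext t; push_cast; ring_nf
  have hconj_ne (t : ℝ) : (x : ℂ) - t * I ≠ 0 := by
    simpa [sub_eq_add_neg] using ofReal_add_mul_I_ne_zero hx (-t)
  have hpair (t : ℝ) : ((x : ℂ) + t * I)⁻¹ + ((x : ℂ) - t * I)⁻¹ =
      ((2 * (x / (x ^ 2 + t ^ 2)) : ℝ) : ℂ) := by
    have hx' : (x : ℂ) ^ 2 + (t : ℂ) ^ 2 ≠ 0 := by
      exact_mod_cast (by positivity : x ^ 2 + t ^ 2 ≠ 0)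
    have := ofReal_add_mul_I_ne_zero hx t
    have := hconj_ne t
    push_cast
    field_simp
    linear_combination (2 * x * t ^ 2 : ℂ) * I_sq
  have hsum : 2 * verticalIntegral (·⁻¹) x T =
      ∫ t in (-T)..T, ((2 * (x / (x ^ 2 + t ^ 2)) : ℝ) : ℂ) := by
    rw [two_mul]
    nth_rw 2 [hconj]
    rw [verticalIntegral, ← integral_add]
    · exact integral_congr fun t _ => hpair t
    · exact intervalIntegrable_vertical hx continuousOn_inv₀ _ _
    · exact (Continuous.inv₀ (by fun_prop) hconj_ne).intervalIntegrable _ _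
  rw [intervalIntegral.integral_ofReal, intervalIntegral.integral_const_mul, integral_div_sq_add_sq,
    neg_div, Real.arctan_neg] at hsum
  simp only [ofReal_mul, ofReal_sub, ofReal_neg, ofReal_ofNat] at hsum
  linear_combination hsum / 2

theorem tendsto_verticalIntegral_inv {x : ℝ} (hx : 0 < x) :
    Tendsto (verticalIntegral (·⁻¹) x) atTop (𝓝 π) := by
  have harctan : Tendsto (fun T : ℝ => Real.arctan (T / x)) atTop (𝓝 (π / 2)) :=
    (Real.tendsto_arctan_atTop.mono_right nhdsWithin_le_nhds).comp
      (tendsto_id.atTop_div_const hx)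
  convert ((continuous_ofReal.tendsto _).comp harctan).const_mul (2 : ℂ) using 1
  · ext T; exact verticalIntegral_inv hx.ne' T
  · congr 1; push_cast; ring

noncomputable def perronKernel (L : ℝ) (s : ℂ) : ℂ :=
  exp (s * L) / s

theorem norm_perronKernel (L : ℝ) (s : ℂ) :
    ‖perronKernel L s‖ = Real.exp (s.re * L) / ‖s‖ := by
  rw [perronKernel, norm_div, norm_exp, re_mul_ofReal]

theorem perronKernel_zero : perronKernel 0 = (·⁻¹) := by
  ext s; simp [perronKernel]

theorem perronKernel_neg (L : ℝ) (s : ℂ) : perronKernel L (-s) = -perronKernel (-L) s := by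
  simp only [perronKernel, ofReal_neg, neg_mul, mul_neg, div_neg]

theorem differentiableOn_perronKernel (L : ℝ) : DifferentiableOn ℂ (perronKernel L) {0}ᶜ :=
  fun _ hs => ((differentiable_exp.comp (differentiable_id.mul_const _)).differentiableAt.div
    differentiableAt_id (mem_compl_singleton_iff.mp hs)).differentiableWithinAt

theorem norm_verticalIntegral_perronKernel_le (L : ℝ) {x T : ℝ} (hx : 0 < x) (hT : 0 ≤ T) :
    ‖verticalIntegral (perronKernel L) x T‖ ≤ Real.exp (x * L) / x * (2 * T) := by
  have hpt (t : ℝ) : ‖perronKernel L (x + t * I)‖ ≤ Real.exp (x * L) / x := by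
    rw [norm_perronKernel]
    simp only [add_re, ofReal_re, re_ofReal_mul, I_re, mul_zero, add_zero]
    gcongr
    simpa using re_le_norm ((x : ℂ) + t * I)
  calc _ ≤ Real.exp (x * L) / x * |T - -T| := norm_integral_le_of_norm_le_const fun t _ => hpt t
    _ = _ := by rw [sub_neg_eq_add, abs_of_nonneg (by linarith)]; ring

theorem norm_integral_perronKernel_horizontal_le {L a b y : ℝ} (hL : L < 0) (hab : a ≤ b)
    (hy : y ≠ 0) :
    ‖∫ u in a..b, perronKernel L (u + y * I)‖ ≤ Real.exp (a * L) / (-L * |y|) := by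
  have hpt (u : ℝ) : ‖perronKernel L (u + y * I)‖ ≤ Real.exp (u * L) / |y| := by
    rw [norm_perronKernel]
    simp only [add_re, ofReal_re, re_ofReal_mul, I_re, mul_zero, add_zero]
    gcongr
    simpa using abs_im_le_norm ((u : ℂ) + y * I)
  have hexp : ∫ u in a..b, Real.exp (u * L) / |y| =
      (Real.exp (a * L) - Real.exp (b * L)) / (-L * |y|) := by
    rw [intervalIntegral.integral_div, integral_comp_mul_right _ hL.ne, integral_exp, smul_eq_mul]
    field_simp
    ring
  calc _ ≤ ∫ u in a..b, Real.exp (u * L) / |y| :=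
        norm_integral_le_of_norm_le hab (MeasureTheory.ae_of_all _ fun u _ => hpt u)
          (Continuous.intervalIntegrable (by fun_prop) a b)
    _ ≤ _ := by
      rw [hexp]
      gcongr
      · exact mul_pos (neg_pos.2 hL) (abs_pos.2 hy) |>.le
      · linarith [Real.exp_pos (b * L)]

theorem norm_verticalIntegral_perronKernel_le_of_neg {L x T : ℝ} (hL : L < 0) (hx : 0 < x)
    (hxT : x ≤ T) :
    ‖verticalIntegral (perronKernel L) x T‖ ≤
      2 * Real.exp (T * L) + 2 * (Real.exp (x * L) / (-L * T)) := by
  have hT : 0 < T := hx.trans_le hxT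
  have hzero : [[x, T]] ×ℂ [[-T, T]] ⊆ {0}ᶜ := by
    rintro s hs rfl
    simp only [mem_reProdIm, zero_re, uIcc_of_le hxT, mem_Icc] at hs
    linarith [hs.1.1]
  have hrect := verticalIntegral_sub_verticalIntegral ((differentiableOn_perronKernel L).mono hzero)
  have hlow := norm_integral_perronKernel_horizontal_le hL hxT (neg_ne_zero.2 hT.ne')
  have hup := norm_integral_perronKernel_horizontal_le hL hxT hT.ne'
  simp only [ofReal_neg, neg_mul (T : ℂ), ← sub_eq_add_neg, abs_neg, abs_of_pos hT] at hlow hup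
  calc _ = ‖verticalIntegral (perronKernel L) T T -
          I * ((∫ u in x..T, perronKernel L (u - T * I)) -
            ∫ u in x..T, perronKernel L (u + T * I))‖ := by rw [← hrect, sub_sub_cancel]
    _ ≤ ‖verticalIntegral (perronKernel L) T T‖ +
          (‖∫ u in x..T, perronKernel L (u - T * I)‖ +
            ‖∫ u in x..T, perronKernel L (u + T * I)‖) := by
      grw [norm_sub_le, norm_mul, norm_I, one_mul, norm_sub_le]
    _ ≤ Real.exp (T * L) / T * (2 * T) +
          (Real.exp (x * L) / (-L * T) + Real.exp (x * L) / (-L * T)) := by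
      gcongr
      exact norm_verticalIntegral_perronKernel_le L hT hT.le
    _ = _ := by field_simp; ring

theorem tendsto_verticalIntegral_perronKernel_of_neg {L x : ℝ} (hL : L < 0) (hx : 0 < x) :
    Tendsto (verticalIntegral (perronKernel L) x) atTop (𝓝 0) := by
  have hexp : Tendsto (fun T => Real.exp (T * L)) atTop (𝓝 0) :=
    Real.tendsto_exp_atBot.comp (tendsto_id.atTop_mul_const_of_neg hL)
  have hinv : Tendsto (fun T => Real.exp (x * L) / (-L * T)) atTop (𝓝 0) :=
    tendsto_const_nhds.div_atTop (tendsto_id.const_mul_atTop (neg_pos.2 hL))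
  have hbound : Tendsto (fun T => 2 * Real.exp (T * L) + 2 * (Real.exp (x * L) / (-L * T))) atTop
      (𝓝 0) := by
    simpa using (hexp.const_mul 2).add (hinv.const_mul 2)
  refine squeeze_zero_norm' ?_ hbound
  filter_upwards [eventually_ge_atTop x] with T hxT
  exact norm_verticalIntegral_perronKernel_le_of_neg hL hx hxT

noncomputable def perronKernelSubInv (L : ℝ) : ℂ → ℂ :=
  dslope (fun s => exp (s * L)) 0

theorem differentiable_perronKernelSubInv (L : ℝ) :
    Differentiable ℂ (perronKernelSubInv L) := by
  rw [← differentiableOn_univ]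
  exact (differentiableOn_dslope univ_mem).2
    (differentiable_exp.comp (differentiable_id.mul_const _)).differentiableOn

theorem perronKernelSubInv_of_ne_zero (L : ℝ) {s : ℂ} (hs : s ≠ 0) :
    perronKernelSubInv L s = perronKernel L s - s⁻¹ := by
  rw [perronKernelSubInv, dslope_of_ne _ hs, slope_def_field, perronKernel]
  simp [div_eq_mul_inv, sub_mul]

theorem verticalIntegral_perronKernelSubInv (L : ℝ) {x : ℝ} (hx : x ≠ 0) (T : ℝ) :
    verticalIntegral (perronKernelSubInv L) x T =
      verticalIntegral (perronKernel L) x T - verticalIntegral (·⁻¹) x T := by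
  rw [← verticalIntegral_sub hx (differentiableOn_perronKernel L).continuousOn
    continuousOn_inv₀]
  exact integral_congr fun t _ =>
    perronKernelSubInv_of_ne_zero L (ofReal_add_mul_I_ne_zero hx t)

theorem norm_integral_perronKernelSubInv_horizontal_le {L x y : ℝ} (hL : 0 ≤ L) (hx : 0 ≤ x)
    (hy : y ≠ 0) :
    ‖∫ u in -x..x, perronKernelSubInv L (u + y * I)‖ ≤
      (Real.exp (x * L) + 1) * (2 * x) / |y| := by
  have hpt (u : ℝ) (hu : u ∈ Ι (-x) x) :
      ‖perronKernelSubInv L (u + y * I)‖ ≤ (Real.exp (x * L) + 1) / |y| := by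
    have hs : (u : ℂ) + y * I ≠ 0 := fun h => hy (by simpa using congrArg im h)
    have hy' : |y| ≤ ‖(u : ℂ) + y * I‖ := by simpa using abs_im_le_norm ((u : ℂ) + y * I)
    rw [uIoc_of_le (by linarith)] at hu
    calc _ ≤ ‖perronKernel L (u + y * I)‖ + ‖((u : ℂ) + y * I)⁻¹‖ := by
          rw [perronKernelSubInv_of_ne_zero L hs]; exact norm_sub_le _ _
      _ = (Real.exp (u * L) + 1) / ‖(u : ℂ) + y * I‖ := by
          rw [norm_perronKernel, norm_inv, add_div, one_div]
          simp
      _ ≤ _ := by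
          gcongr
          exact hu.2
  calc _ ≤ (Real.exp (x * L) + 1) / |y| * |x - -x| := norm_integral_le_of_norm_le_const hpt
    _ = _ := by rw [sub_neg_eq_add, abs_of_nonneg (by linarith : 0 ≤ x + x)]; ring

theorem tendsto_integral_perronKernelSubInv_horizontal {L x : ℝ} (hL : 0 ≤ L) (hx : 0 ≤ x) :
    Tendsto (fun y : ℝ => ∫ u in -x..x, perronKernelSubInv L (u + y * I)) (cocompact ℝ)
      (𝓝 0) := by
  refine squeeze_zero_norm' ?_
    ((tendsto_const_nhds (x := (Real.exp (x * L) + 1) * (2 * x))).div_atTop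
      tendsto_norm_cocompact_atTop)
  filter_upwards [(isCompact_singleton (x := (0 : ℝ))).compl_mem_cocompact] with y hy
  rw [Real.norm_eq_abs]
  exact norm_integral_perronKernelSubInv_horizontal_le hL hx hy

theorem verticalIntegral_perronKernel_eq (L : ℝ) {x : ℝ} (hx : x ≠ 0) (T : ℝ) :
    verticalIntegral (perronKernel L) x T =
      2 * verticalIntegral (·⁻¹) x T - verticalIntegral (perronKernel (-L)) x T +
        I * ((∫ u in -x..x, perronKernelSubInv L (u - T * I)) -
          ∫ u in -x..x, perronKernelSubInv L (u + T * I)) := by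
  have h := verticalIntegral_sub_verticalIntegral (x₁ := -x) (x₂ := x) (T := T)
    (differentiable_perronKernelSubInv L).differentiableOn
  rw [verticalIntegral_perronKernelSubInv L hx,
    verticalIntegral_perronKernelSubInv L (neg_ne_zero.2 hx),
    ← verticalIntegral_comp_neg, ← verticalIntegral_comp_neg] at h
  simp only [perronKernel_neg, inv_neg, verticalIntegral_neg] at h
  linear_combination h

theorem tendsto_verticalIntegral_perronKernel_of_pos {L x : ℝ} (hL : 0 < L) (hx : 0 < x) :
    Tendsto (verticalIntegral (perronKernel L) x) atTop (𝓝 (2 * π)) := by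
  have hH := tendsto_integral_perronKernelSubInv_horizontal hL.le hx.le
  have hlow : Tendsto (fun T : ℝ => ∫ u in -x..x, perronKernelSubInv L (u - T * I)) atTop
      (𝓝 0) := by
    simpa only [Function.comp_def, ofReal_neg, neg_mul, ← sub_eq_add_neg] using
      hH.comp (tendsto_neg_atTop_atBot.mono_right atBot_le_cocompact)
  have hup := hH.comp (tendsto_id.mono_right atTop_le_cocompact)
  rw [show (2 * π : ℂ) = 2 * π - 0 + I * (0 - 0) by ring]
  refine ((((tendsto_verticalIntegral_inv hx).const_mul 2).sub
    (tendsto_verticalIntegral_perronKernel_of_neg (neg_lt_zero.2 hL) hx)).add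
    ((hlow.sub hup).const_mul I)).congr fun T => (verticalIntegral_perronKernel_eq L hx.ne' T).symm

/-- The Mellin/Perron identity: for `b, α > 0`,
`lim_{T→∞} (1/2πi) ∫_{α-iT}^{α+iT} bˢ ds/s` equals `1` if `b > 1`, `1/2` if `b = 1`,
and `0` if `b < 1`. -/
theorem stmt9 (b α : ℝ) (hb : 0 < b) (hα : 0 < α) :
    Filter.Tendsto (fun T : ℝ =>
      (1 / (2 * Real.pi * Complex.I)) *
        ∫ t in (-T)..T,
          Complex.exp (((α : ℂ) + t * Complex.I) * (Real.log b : ℂ))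
            / ((α : ℂ) + t * Complex.I) * Complex.I)
      Filter.atTop
      (nhds (if 1 < b then 1 else if b = 1 then 1 / 2 else 0)) := by
  have hlim : Tendsto (verticalIntegral (perronKernel (Real.log b)) α) atTop
      (𝓝 (2 * π * if 1 < b then 1 else if b = 1 then 1 / 2 else 0)) := by
    rcases lt_trichotomy b 1 with hb1 | rfl | hb1
    · simpa [hb1.not_gt, hb1.ne] using
        tendsto_verticalIntegral_perronKernel_of_neg (Real.log_neg hb hb1) hα
    · convert tendsto_verticalIntegral_inv hα using 2
      · simp [perronKernel_zero]
      · rw [if_neg (lt_irrefl 1), if_pos rfl]; ring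
    · simpa [hb1] using tendsto_verticalIntegral_perronKernel_of_pos (Real.log_pos hb1) hα
  have h2πI : (2 * π * I : ℂ) ≠ 0 := by simp [Real.pi_ne_zero, I_ne_zero]
  convert (hlim.mul_const I).const_mul (1 / (2 * π * I)) using 2
  · rw [verticalIntegral, ← integral_mul_const]; rfl
  · field_simp
end

section
/- Let $P$ be a squarefree positive integer whose prime factors are all at most $y$, and let $f$ be a multiplicative function with $0 \le f(p) \le 1/p$ for all primes $p$. Let $x \ge y \ge 2$, $\beta := \log x / \log y$, and $\theta \in (0,1)$. Then $\sum_{\substack{k_1 k_2 \mid P,\ (k_1,k_2)=1 \\ k_1 k_2 > x^{\theta/2}}} f(k_1) f(k_2) \prod_{p \mid P/(k_1 k_2)}(1 - 2f(p)) \ll e^{-\frac{\theta}{6} \beta \log \beta}$, provided $\beta$ is sufficiently large, with implied constant depending only on $\theta$. -/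
/-!
Rankin's trick. For `σ > 0`, a term with `k₁k₂ > x^{θ/2}` is at most `x^{-θσ/2} (k₁k₂)^σ` times
itself, and after dropping the size condition the sum over coprime pairs factors over the primes
of `P` as `∏ (1 + 2f(p)(p^σ - 1)) ≤ exp (2 ∑_{p ≤ y} (p^σ - 1)/p)`. Chebyshev's bound
`θ(t) ≤ t log 4` and partial summation give `∑_{p ≤ y} (p^σ - 1)/p ≤ 2 y^σ`. With
`σ = log β / (2 log y)` we get `y^σ = √β` and `x^{-θσ/2} = exp (-(θ/4) β log β)`, and the
`exp (4√β)` loss is absorbed once `β` is large.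
-/

open Finset

theorem sub_one_rpow_add_mul_rpow_sub_one_le {σ a : ℝ} (hσ0 : 0 ≤ σ) (hσ1 : σ ≤ 1) (ha : 1 ≤ a) :
    (a - 1) ^ σ + σ * a ^ (σ - 1) ≤ a ^ σ := by
  have ha0 : 0 < a := by linarith
  have hsplit : a - 1 = a * (1 + -a⁻¹) := by field_simp; ring
  have hbernoulli : (1 + -a⁻¹) ^ σ ≤ 1 + σ * -a⁻¹ :=
    rpow_one_add_le_one_add_mul_self (by simpa using inv_le_one_of_one_le₀ ha) hσ0 hσ1
  calc (a - 1) ^ σ + σ * a ^ (σ - 1)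
      = a ^ σ * (1 + -a⁻¹) ^ σ + σ * (a ^ σ * a⁻¹) := by
        rw [hsplit, Real.mul_rpow ha0.le (by linarith [inv_le_one_of_one_le₀ ha]),
          Real.rpow_sub_one ha0.ne', div_eq_mul_inv]
    _ ≤ a ^ σ * (1 + σ * -a⁻¹) + σ * (a ^ σ * a⁻¹) := by gcongr
    _ = a ^ σ := by ring

theorem sum_range_add_one_rpow_sub_one_le {σ : ℝ} (hσ0 : 0 < σ) (hσ1 : σ ≤ 1) (N : ℕ) :
    ∑ i ∈ range N, ((i : ℝ) + 1) ^ (σ - 1) ≤ (N : ℝ) ^ σ / σ := by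
  induction N with
  | zero => simp [Real.zero_rpow hσ0.ne']
  | succ N ih =>
    have step := sub_one_rpow_add_mul_rpow_sub_one_le hσ0.le hσ1
      (le_add_of_nonneg_left (Nat.cast_nonneg N : (0 : ℝ) ≤ N))
    rw [sum_range_succ, Nat.cast_succ, le_div_iff₀ hσ0]
    rw [le_div_iff₀ hσ0] at ih
    simp only [add_sub_cancel_right] at step
    nlinarith

theorem sum_range_mul_le_of_partialSums_le {a b c : ℕ → ℝ} (hc : Antitone c) (hc0 : ∀ n, 0 ≤ c n)
    (hab : ∀ m, ∑ i ∈ range m, a i ≤ ∑ i ∈ range m, b i) (N : ℕ) :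
    ∑ i ∈ range N, a i * c i ≤ ∑ i ∈ range N, b i * c i := by
  have hdiff : ∑ i ∈ range N, a i * c i - ∑ i ∈ range N, b i * c i
      = ∑ i ∈ range N, c i • (a i - b i) := by
    rw [← sum_sub_distrib]
    exact sum_congr rfl fun i _ => by rw [smul_eq_mul]; ring
  rw [← sub_nonpos, hdiff, sum_range_by_parts, sub_nonpos]
  refine le_trans ?_ (sum_nonneg fun i _ => ?_)
  · exact smul_nonpos_of_nonneg_of_nonpos (hc0 _) (by simpa [sum_sub_distrib] using hab N)
  · exact smul_nonneg_of_nonpos_of_nonpos (sub_nonpos.2 (hc (Nat.le_succ i)))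
      (by simpa [sum_sub_distrib] using hab (i + 1))

theorem sum_primesLE_log_mul_rpow_le {σ : ℝ} (hσ0 : 0 < σ) (hσ1 : σ ≤ 1) (N : ℕ) :
    ∑ p ∈ Nat.primesLE N, Real.log p * (p : ℝ) ^ (σ - 1) ≤ Real.log 4 * (N : ℝ) ^ σ / σ := by
  set a : ℕ → ℝ := fun n => if n.Prime then Real.log n else 0
  -- Indices are shifted by one because `0 ^ (σ - 1) = 0` would break antitonicity of the weight.
  have hpartial : ∀ m, ∑ i ∈ range m, a (i + 1) ≤ ∑ i ∈ range m, Real.log 4 := by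
    intro m
    have := Chebyshev.theta_le_log4_mul_x (Nat.cast_nonneg m : (0 : ℝ) ≤ m)
    rw [Chebyshev.theta_eq_sum_primesLE_log, Nat.primesLE_eq_filter_range, sum_filter,
      sum_range_succ'] at this
    simpa [a, mul_comm] using this
  have habel := sum_range_mul_le_of_partialSums_le
    (c := fun i => ((i : ℝ) + 1) ^ (σ - 1))
    (fun i j hij => Real.rpow_le_rpow_of_nonpos (by positivity) (by gcongr) (by linarith))
    (fun i => by positivity) hpartial N
  calc ∑ p ∈ Nat.primesLE N, Real.log p * (p : ℝ) ^ (σ - 1)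
      = ∑ i ∈ range N, a (i + 1) * ((i : ℝ) + 1) ^ (σ - 1) := by
        rw [Nat.primesLE_eq_filter_range, sum_filter, sum_range_succ']
        simp [a, ite_mul]
    _ ≤ Real.log 4 * ∑ i ∈ range N, ((i : ℝ) + 1) ^ (σ - 1) := by
        rw [mul_sum]; exact habel
    _ ≤ Real.log 4 * ((N : ℝ) ^ σ / σ) := by
        gcongr; exact sum_range_add_one_rpow_sub_one_le hσ0 hσ1 N
    _ = Real.log 4 * (N : ℝ) ^ σ / σ := by ring

theorem rpow_sub_one_le_mul_log_mul_rpow {t : ℝ} (ht : 0 < t) (σ : ℝ) :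
    t ^ σ - 1 ≤ σ * Real.log t * t ^ σ := by
  have h := Real.one_sub_le_exp_neg (σ * Real.log t)
  rw [Real.rpow_def_of_pos ht, mul_comm (Real.log t)]
  have hexp : 0 < Real.exp (σ * Real.log t) := Real.exp_pos _
  have : Real.exp (-(σ * Real.log t)) * Real.exp (σ * Real.log t) = 1 := by
    rw [← Real.exp_add, neg_add_cancel, Real.exp_zero]
  nlinarith

theorem sum_primesLE_rpow_sub_one_div_le {σ : ℝ} (hσ : 0 < σ) (N : ℕ) :
    ∑ p ∈ Nat.primesLE N, ((p : ℝ) ^ σ - 1) / p ≤ 2 * (N : ℝ) ^ σ := by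
  have hN : (0 : ℝ) ≤ (N : ℝ) ^ σ := by positivity
  rcases le_or_gt σ 1 with hσ1 | hσ1
  · calc ∑ p ∈ Nat.primesLE N, ((p : ℝ) ^ σ - 1) / p
        ≤ ∑ p ∈ Nat.primesLE N, σ * (Real.log p * (p : ℝ) ^ (σ - 1)) := by
          refine sum_le_sum fun p hp => ?_
          have hp : (0 : ℝ) < p := by exact_mod_cast (Nat.mem_primesLE.1 hp).2.pos
          rw [Real.rpow_sub_one hp.ne', div_le_iff₀ hp]
          have := rpow_sub_one_le_mul_log_mul_rpow hp σ
          field_simp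
          linarith
      _ ≤ σ * (Real.log 4 * (N : ℝ) ^ σ / σ) := by
          rw [← mul_sum]; gcongr; exact sum_primesLE_log_mul_rpow_le hσ hσ1 N
      _ ≤ 2 * (N : ℝ) ^ σ := by
          rw [mul_div_cancel₀ _ hσ.ne']
          gcongr
          rw [show (4 : ℝ) = 2 ^ 2 by norm_num, Real.log_pow]
          norm_num
          linarith [Real.log_two_lt_d9]
  · calc ∑ p ∈ Nat.primesLE N, ((p : ℝ) ^ σ - 1) / p
        ≤ ∑ p ∈ Nat.primesLE N, (N : ℝ) ^ (σ - 1) := by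
          refine sum_le_sum fun p hp => ?_
          obtain ⟨hpN, hp⟩ := Nat.mem_primesLE.1 hp
          have hp0 : (0 : ℝ) < p := by exact_mod_cast hp.pos
          rw [sub_div, ← Real.rpow_sub_one hp0.ne']
          calc (p : ℝ) ^ (σ - 1) - 1 / p ≤ (p : ℝ) ^ (σ - 1) := by
                linarith [one_div_pos.2 hp0]
            _ ≤ (N : ℝ) ^ (σ - 1) := by gcongr
      _ ≤ N * (N : ℝ) ^ (σ - 1) := by
          rw [sum_const, nsmul_eq_mul]
          gcongr
          rw [Nat.primesLE_eq_filter_Icc_one]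
          exact_mod_cast (card_filter_le _ _).trans_eq (Nat.card_Icc 1 N)
      _ ≤ 2 * (N : ℝ) ^ σ := by
          rw [← Real.rpow_one_add' (Nat.cast_nonneg N) (by linarith)]
          ring_nf; linarith

theorem prod_add_add_eq_sum_disjoint {ι R : Type*} [CommSemiring R] [DecidableEq ι]
    (s : Finset ι) (u v w : ι → R) :
    ∏ i ∈ s, (u i + v i + w i) =
      ∑ A ∈ (s.powerset ×ˢ s.powerset).filter (fun A => Disjoint A.1 A.2),
        (∏ i ∈ A.1, u i) * (∏ i ∈ A.2, v i) * ∏ i ∈ s \ (A.1 ∪ A.2), w i := by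
  simp_rw [add_assoc, prod_add, mul_sum, sum_filter, sum_product]
  refine sum_congr rfl fun A hA => ?_
  rw [← sum_filter]
  have hdisjoint : s.powerset.filter (fun B => Disjoint A B) = (s \ A).powerset := by
    ext B
    simp only [mem_filter, mem_powerset, subset_sdiff, disjoint_comm]
  rw [hdisjoint]
  refine sum_congr rfl fun B _ => ?_
  rw [sdiff_sdiff_left, mul_assoc]; rfl

def coprimePairsDvd (P : ℕ) : Finset (ℕ × ℕ) :=
  (P.divisors ×ˢ P.divisors).filter fun k => k.1 * k.2 ∣ P ∧ Nat.Coprime k.1 k.2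

theorem mem_coprimePairsDvd {P : ℕ} {k : ℕ × ℕ} :
    k ∈ coprimePairsDvd P ↔ k.1 * k.2 ∣ P ∧ Nat.Coprime k.1 k.2 ∧ P ≠ 0 := by
  simp only [coprimePairsDvd, mem_filter, mem_product, Nat.mem_divisors]
  constructor
  · rintro ⟨⟨⟨_, hP⟩, _⟩, hdvd, hcop⟩
    exact ⟨hdvd, hcop, hP⟩
  · rintro ⟨hdvd, hcop, hP⟩
    exact ⟨⟨⟨dvd_of_mul_right_dvd hdvd, hP⟩, ⟨dvd_of_mul_left_dvd hdvd, hP⟩⟩, hdvd, hcop⟩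

theorem sum_coprimePairsDvd_eq_sum_disjoint {M : Type*} [AddCommMonoid M] {P : ℕ}
    (hP : Squarefree P) (G : Finset ℕ × Finset ℕ → M) :
    ∑ k ∈ coprimePairsDvd P, G (k.1.primeFactors, k.2.primeFactors) =
      ∑ A ∈ (P.primeFactors.powerset ×ˢ P.primeFactors.powerset).filter
        (fun A => Disjoint A.1 A.2), G A := by
  have hprime : ∀ {A : Finset ℕ}, A ⊆ P.primeFactors → ∀ p ∈ A, p.Prime :=
    fun hA p hp => Nat.prime_of_mem_primeFactors (hA hp)
  refine sum_nbij' (fun k => (k.1.primeFactors, k.2.primeFactors))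
    (fun A => (∏ p ∈ A.1, p, ∏ p ∈ A.2, p)) (fun k hk => ?_) (fun A hA => ?_)
    (fun k hk => ?_) (fun A hA => ?_) (fun _ _ => rfl)
  · obtain ⟨hdvd, hcop, hP0⟩ := mem_coprimePairsDvd.1 hk
    simp only [mem_filter, mem_product, mem_powerset]
    exact ⟨⟨Nat.primeFactors_mono (dvd_of_mul_right_dvd hdvd) hP0,
      Nat.primeFactors_mono (dvd_of_mul_left_dvd hdvd) hP0⟩, hcop.disjoint_primeFactors⟩
  · simp only [mem_filter, mem_product, mem_powerset] at hA
    obtain ⟨⟨hA1, hA2⟩, hdisj⟩ := hA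
    have hdvd : (∏ p ∈ A.1, p) * ∏ p ∈ A.2, p ∣ P := by
      rw [← prod_union hdisj, ← Nat.prod_primeFactors_of_squarefree hP]
      exact prod_dvd_prod_of_subset _ _ _ (union_subset hA1 hA2)
    exact mem_coprimePairsDvd.2
      ⟨hdvd, (Nat.squarefree_mul_iff.1 (hP.squarefree_of_dvd hdvd)).1, hP.ne_zero⟩
  · obtain ⟨hdvd, -, -⟩ := mem_coprimePairsDvd.1 hk
    exact Prod.ext
      (Nat.prod_primeFactors_of_squarefree (hP.squarefree_of_dvd (dvd_of_mul_right_dvd hdvd)))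
      (Nat.prod_primeFactors_of_squarefree (hP.squarefree_of_dvd (dvd_of_mul_left_dvd hdvd)))
  · simp only [mem_filter, mem_product, mem_powerset] at hA
    exact Prod.ext (Nat.primeFactors_prod (hprime hA.1.1)) (Nat.primeFactors_prod (hprime hA.1.2))

theorem sum_coprimePairsDvd_prod_eq_prod {R : Type*} [CommSemiring R] {P : ℕ}
    (hP : Squarefree P) (u v w : ℕ → R) :
    ∑ k ∈ coprimePairsDvd P, (∏ p ∈ k.1.primeFactors, u p) * (∏ p ∈ k.2.primeFactors, v p) *
        ∏ p ∈ (P / (k.1 * k.2)).primeFactors, w p =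
      ∏ p ∈ P.primeFactors, (u p + v p + w p) := by
  have hcompl : ∀ k ∈ coprimePairsDvd P,
      (P / (k.1 * k.2)).primeFactors = P.primeFactors \ (k.1.primeFactors ∪ k.2.primeFactors) := by
    intro k hk
    obtain ⟨hdvd, -, -⟩ := mem_coprimePairsDvd.1 hk
    have hk0 : k.1 * k.2 ≠ 0 := ne_zero_of_dvd_ne_zero hP.ne_zero hdvd
    rw [← Nat.gcd_eq_right hdvd, Nat.primeFactors_div_gcd hP hk0,
      Nat.primeFactors_mul (left_ne_zero_of_mul hk0) (right_ne_zero_of_mul hk0)]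
  rw [sum_congr rfl fun k hk => by rw [hcompl k hk], prod_add_add_eq_sum_disjoint,
    sum_coprimePairsDvd_eq_sum_disjoint hP
      (fun A => (∏ p ∈ A.1, u p) * (∏ p ∈ A.2, v p) * ∏ p ∈ P.primeFactors \ (A.1 ∪ A.2), w p)]

theorem eq_prod_primeFactors_of_squarefree {M : Type*} [CommMonoid M] {f : ℕ → M} (h1 : f 1 = 1)
    (hmul : ∀ m n : ℕ, Nat.Coprime m n → f (m * n) = f m * f n) {n : ℕ} (hn : Squarefree n) :
    f n = ∏ p ∈ n.primeFactors, f p := by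
  rw [Nat.multiplicative_factorization f hmul h1 hn.ne_zero, Finsupp.prod,
    Nat.support_factorization]
  refine prod_congr rfl fun p hp => ?_
  rw [Nat.factorization_eq_one_of_squarefree hn (Nat.prime_of_mem_primeFactors hp)
    (Nat.dvd_of_mem_primeFactors hp), pow_one]

theorem sum_coprimePairsDvd_rpow_mul_eq_prod {P : ℕ} (hP : Squarefree P) {f : ℕ → ℝ}
    (h1 : f 1 = 1) (hmul : ∀ m n : ℕ, Nat.Coprime m n → f (m * n) = f m * f n)
    (w : ℕ → ℝ) (σ : ℝ) :
    ∑ k ∈ coprimePairsDvd P, ((k.1 * k.2 : ℕ) : ℝ) ^ σ *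
        (f k.1 * f k.2 * ∏ p ∈ (P / (k.1 * k.2)).primeFactors, w p) =
      ∏ p ∈ P.primeFactors, (2 * (f p * (p : ℝ) ^ σ) + w p) := by
  have hsplit : ∀ {n : ℕ}, Squarefree n →
      f n * (n : ℝ) ^ σ = ∏ p ∈ n.primeFactors, f p * (p : ℝ) ^ σ := by
    intro n hn
    rw [prod_mul_distrib, ← eq_prod_primeFactors_of_squarefree h1 hmul hn,
      Real.finsetProd_rpow _ _ (fun p _ => Nat.cast_nonneg p), ← Nat.cast_prod,
      Nat.prod_primeFactors_of_squarefree hn]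
  simp_rw [two_mul, ← sum_coprimePairsDvd_prod_eq_prod hP]
  refine sum_congr rfl fun k hk => ?_
  obtain ⟨hdvd, -, -⟩ := mem_coprimePairsDvd.1 hk
  rw [← hsplit (hP.squarefree_of_dvd (dvd_of_mul_right_dvd hdvd)),
    ← hsplit (hP.squarefree_of_dvd (dvd_of_mul_left_dvd hdvd)), Nat.cast_mul,
    Real.mul_rpow (Nat.cast_nonneg _) (Nat.cast_nonneg _)]
  ring

theorem coprimePairsDvd_summand_nonneg {P : ℕ} (hP : Squarefree P) {f : ℕ → ℝ} (h1 : f 1 = 1)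
    (hmul : ∀ m n : ℕ, Nat.Coprime m n → f (m * n) = f m * f n)
    (hf : ∀ p : ℕ, p.Prime → 0 ≤ f p ∧ f p ≤ 1 / (p : ℝ)) {k : ℕ × ℕ}
    (hk : k ∈ coprimePairsDvd P) :
    0 ≤ f k.1 * f k.2 * ∏ p ∈ (P / (k.1 * k.2)).primeFactors, (1 - 2 * f p) := by
  have hf_nonneg : ∀ {n : ℕ}, n ∣ P → 0 ≤ f n := fun hn => by
    rw [eq_prod_primeFactors_of_squarefree h1 hmul (hP.squarefree_of_dvd hn)]
    exact prod_nonneg fun p hp => (hf p (Nat.prime_of_mem_primeFactors hp)).1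
  have hw_nonneg : ∀ p ∈ (P / (k.1 * k.2)).primeFactors, 0 ≤ 1 - 2 * f p := fun p hp => by
    have hpp := Nat.prime_of_mem_primeFactors hp
    have hp2 : (2 : ℝ) ≤ p := by exact_mod_cast hpp.two_le
    linarith [(hf p hpp).2, one_div_le_one_div_of_le two_pos hp2]
  obtain ⟨hdvd, -, -⟩ := mem_coprimePairsDvd.1 hk
  exact mul_nonneg (mul_nonneg (hf_nonneg (dvd_of_mul_right_dvd hdvd))
    (hf_nonneg (dvd_of_mul_left_dvd hdvd))) (prod_nonneg hw_nonneg)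

theorem sum_primeFactors_rpow_sub_one_div_le {σ y : ℝ} (hσ : 0 < σ) (hy : 0 ≤ y) {P : ℕ}
    (hPy : ∀ p ∈ P.primeFactors, (p : ℝ) ≤ y) :
    ∑ p ∈ P.primeFactors, ((p : ℝ) ^ σ - 1) / p ≤ 2 * y ^ σ := by
  have hsub : P.primeFactors ⊆ Nat.primesLE ⌊y⌋₊ := fun p hp =>
    Nat.mem_primesLE.2 ⟨Nat.le_floor (hPy p hp), Nat.prime_of_mem_primeFactors hp⟩
  have hnonneg : ∀ p ∈ Nat.primesLE ⌊y⌋₊, 0 ≤ ((p : ℝ) ^ σ - 1) / p := fun p hp => by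
    have hp : (1 : ℝ) ≤ p := by exact_mod_cast (Nat.mem_primesLE.1 hp).2.one_le
    exact div_nonneg (sub_nonneg.2 (Real.one_le_rpow hp hσ.le)) (by linarith)
  calc ∑ p ∈ P.primeFactors, ((p : ℝ) ^ σ - 1) / p
      ≤ ∑ p ∈ Nat.primesLE ⌊y⌋₊, ((p : ℝ) ^ σ - 1) / p :=
        sum_le_sum_of_subset_of_nonneg hsub fun p hp _ => hnonneg p hp
    _ ≤ 2 * (⌊y⌋₊ : ℝ) ^ σ := sum_primesLE_rpow_sub_one_div_le hσ _
    _ ≤ 2 * y ^ σ := by gcongr; exact Nat.floor_le hy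

theorem prod_primeFactors_two_mul_rpow_add_le_exp {P : ℕ} {f : ℕ → ℝ} {σ y : ℝ} (hσ : 0 < σ)
    (hy : 0 ≤ y) (hPy : ∀ p ∈ P.primeFactors, (p : ℝ) ≤ y)
    (hf : ∀ p : ℕ, p.Prime → 0 ≤ f p ∧ f p ≤ 1 / (p : ℝ)) :
    ∏ p ∈ P.primeFactors, (2 * (f p * (p : ℝ) ^ σ) + (1 - 2 * f p)) ≤ Real.exp (4 * y ^ σ) := by
  have hterm : ∀ p ∈ P.primeFactors, 0 ≤ 2 * (f p * ((p : ℝ) ^ σ - 1)) ∧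
      2 * (f p * ((p : ℝ) ^ σ - 1)) ≤ 2 * (((p : ℝ) ^ σ - 1) / p) := by
    intro p hp
    have hpp := Nat.prime_of_mem_primeFactors hp
    have hp1 : (1 : ℝ) ≤ p := by exact_mod_cast hpp.one_le
    have hσp : 0 ≤ (p : ℝ) ^ σ - 1 := sub_nonneg.2 (Real.one_le_rpow hp1 hσ.le)
    refine ⟨mul_nonneg zero_le_two (mul_nonneg (hf p hpp).1 hσp), ?_⟩
    rw [div_eq_mul_one_div, mul_comm _ (1 / (p : ℝ))]
    gcongr
    exact (hf p hpp).2
  calc ∏ p ∈ P.primeFactors, (2 * (f p * (p : ℝ) ^ σ) + (1 - 2 * f p))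
      = ∏ p ∈ P.primeFactors, (1 + 2 * (f p * ((p : ℝ) ^ σ - 1))) :=
        prod_congr rfl fun p _ => by ring
    _ ≤ ∏ p ∈ P.primeFactors, Real.exp (2 * (f p * ((p : ℝ) ^ σ - 1))) :=
        prod_le_prod (fun p hp => by linarith [(hterm p hp).1])
          fun p _ => by linarith [Real.add_one_le_exp (2 * (f p * ((p : ℝ) ^ σ - 1)))]
    _ ≤ Real.exp (2 * (2 * y ^ σ)) := by
        rw [← Real.exp_sum, ← mul_sum]
        gcongr
        refine (sum_le_sum fun p hp => ?_).trans (sum_primeFactors_rpow_sub_one_div_le hσ hy hPy)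
        linarith [(hterm p hp).2]
    _ = Real.exp (4 * y ^ σ) := by ring_nf

theorem sum_filter_lt_le_rpow_mul_sum {ι : Type*} (s : Finset ι) {g n : ι → ℝ} {X σ : ℝ}
    (hg : ∀ i ∈ s, 0 ≤ g i) (hn : ∀ i ∈ s, 0 ≤ n i) (hX : 0 < X) (hσ : 0 ≤ σ) :
    ∑ i ∈ s with X < n i, g i ≤ X ^ (-σ) * ∑ i ∈ s, n i ^ σ * g i := by
  rw [mul_sum]
  refine (sum_le_sum fun i hi => ?_).trans
    (sum_le_sum_of_subset_of_nonneg (filter_subset _ s) fun i hi _ => ?_)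
  · obtain ⟨his, hXn⟩ := mem_filter.1 hi
    have hXσ : X ^ σ ≤ n i ^ σ := Real.rpow_le_rpow hX.le hXn.le hσ
    rw [Real.rpow_neg hX.le, ← mul_assoc, ← div_eq_inv_mul]
    exact le_mul_of_one_le_left (hg i his) ((one_le_div (by positivity)).2 hXσ)
  · exact mul_nonneg (Real.rpow_nonneg hX.le _)
      (mul_nonneg (Real.rpow_nonneg (hn i hi) _) (hg i hi))

theorem four_mul_sqrt_le {θ β : ℝ} (hθ : 0 < θ) (hβ : (48 / θ) ^ 2 + 3 ≤ β) :
    4 * √β ≤ θ / 12 * β * Real.log β := by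
  have hβ0 : 0 < β := by linarith [sq_nonneg (48 / θ)]
  have hsqrt : 48 / θ ≤ √β := Real.le_sqrt_of_sq_le (by linarith)
  have hlog : 1 ≤ Real.log β := by
    rw [Real.le_log_iff_exp_le hβ0]
    linarith [Real.exp_one_lt_d9, sq_nonneg (48 / θ)]
  calc 4 * √β = θ / 12 * √β * (48 / θ) := by field_simp; ring
    _ ≤ θ / 12 * √β * (√β * Real.log β) := by
        gcongr
        nlinarith [Real.sqrt_nonneg β]
    _ = θ / 12 * β * Real.log β := by
        linear_combination θ / 12 * Real.log β * Real.mul_self_sqrt hβ0.le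

theorem rpow_eq_sqrt_of_eq_log_div {y β σ : ℝ} (hy : 1 < y) (hβ : 0 < β)
    (hσ : σ = Real.log β / (2 * Real.log y)) : y ^ σ = √β := by
  have hlogy : 0 < Real.log y := Real.log_pos hy
  rw [Real.sqrt_eq_rpow, Real.rpow_def_of_pos (by linarith), Real.rpow_def_of_pos hβ, hσ]
  congr 1
  field_simp

theorem rpow_rpow_neg_eq_exp {x y θ β σ : ℝ} (hx : 0 < x) (hy : 1 < y)
    (hβ : β = Real.log x / Real.log y) (hσ : σ = Real.log β / (2 * Real.log y)) :
    (x ^ (θ / 2)) ^ (-σ) = Real.exp (-(θ / 4) * β * Real.log β) := by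
  have hlogy : 0 < Real.log y := Real.log_pos hy
  rw [← Real.rpow_mul hx.le, Real.rpow_def_of_pos hx, hσ, hβ]
  congr 1
  field_simp
  ring

theorem stmt10_general (θ : ℝ) (hθ0 : 0 < θ) :
    ∃ C β₀ : ℝ, 0 < C ∧ ∀ (x y : ℝ) (P : ℕ) (f : ℕ → ℝ),
      2 ≤ y → y ≤ x → 0 < P → Squarefree P →
      (∀ p ∈ P.primeFactors, (p : ℝ) ≤ y) →
      f 1 = 1 → (∀ m n : ℕ, Nat.Coprime m n → f (m * n) = f m * f n) →
      (∀ p : ℕ, p.Prime → 0 ≤ f p ∧ f p ≤ 1 / (p : ℝ)) →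
      β₀ ≤ Real.log x / Real.log y →
      ∑ k ∈ (P.divisors ×ˢ P.divisors).filter
          (fun k => k.1 * k.2 ∣ P ∧ Nat.Coprime k.1 k.2 ∧
            x ^ (θ / 2) < ((k.1 * k.2 : ℕ) : ℝ)),
        f k.1 * f k.2 * ∏ p ∈ (P / (k.1 * k.2)).primeFactors, (1 - 2 * f p)
      ≤ C * Real.exp (-(θ / 6) * (Real.log x / Real.log y) *
          Real.log (Real.log x / Real.log y)) := by
  refine ⟨1, (48 / θ) ^ 2 + 3, one_pos, ?_⟩
  intro x y P f hy2 hyx _ hP hPy hf1 hfm hfp hβ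
  set β := Real.log x / Real.log y with hβ_def
  set σ := Real.log β / (2 * Real.log y) with hσ_def
  have hx : 0 < x := by linarith
  have hy : 1 < y := by linarith
  have hβ3 : 3 ≤ β := by linarith [sq_nonneg (48 / θ)]
  have hσ : 0 < σ := div_pos (Real.log_pos (by linarith)) (by linarith [Real.log_pos hy])
  calc _ ≤ (x ^ (θ / 2)) ^ (-σ) * ∑ k ∈ coprimePairsDvd P, ((k.1 * k.2 : ℕ) : ℝ) ^ σ *
          (f k.1 * f k.2 * ∏ p ∈ (P / (k.1 * k.2)).primeFactors, (1 - 2 * f p)) := by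
        simpa only [coprimePairsDvd, filter_filter, and_assoc] using
          sum_filter_lt_le_rpow_mul_sum _ (fun k => coprimePairsDvd_summand_nonneg hP hf1 hfm hfp)
            (fun _ _ => Nat.cast_nonneg _) (by positivity) hσ.le
    _ = (x ^ (θ / 2)) ^ (-σ) *
          ∏ p ∈ P.primeFactors, (2 * (f p * (p : ℝ) ^ σ) + (1 - 2 * f p)) := by
        rw [sum_coprimePairsDvd_rpow_mul_eq_prod hP hf1 hfm]
    _ ≤ (x ^ (θ / 2)) ^ (-σ) * Real.exp (4 * y ^ σ) := by
        gcongr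
        exact prod_primeFactors_two_mul_rpow_add_le_exp hσ (by linarith) hPy hfp
    _ = Real.exp (-(θ / 4) * β * Real.log β + 4 * √β) := by
        rw [rpow_rpow_neg_eq_exp hx hy hβ_def hσ_def,
          rpow_eq_sqrt_of_eq_log_div hy (by linarith) hσ_def, ← Real.exp_add]
    _ ≤ 1 * Real.exp (-(θ / 6) * β * Real.log β) := by
        rw [one_mul]
        gcongr
        linarith [four_mul_sqrt_le hθ0 hβ]

/-- Rankin-type tail bound: for `P` squarefree with prime factors at most `y` and
multiplicative `f` with `0 ≤ f(p) ≤ 1/p`, the contribution to the total sum from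
pairs of coprime divisors with product exceeding `x^{θ/2}` is
`≪_θ e^{-(θ/6) β log β}` where `β = log x / log y`, once `β` is large enough. -/
theorem stmt10 (θ : ℝ) (hθ0 : 0 < θ) (hθ1 : θ < 1) :
    ∃ C β₀ : ℝ, 0 < C ∧ ∀ (x y : ℝ) (P : ℕ) (f : ℕ → ℝ),
      2 ≤ y → y ≤ x → 0 < P → Squarefree P →
      (∀ p ∈ P.primeFactors, (p : ℝ) ≤ y) →
      f 1 = 1 → (∀ m n : ℕ, Nat.Coprime m n → f (m * n) = f m * f n) →
      (∀ p : ℕ, p.Prime → 0 ≤ f p ∧ f p ≤ 1 / (p : ℝ)) →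
      β₀ ≤ Real.log x / Real.log y →
      ∑ k ∈ (P.divisors ×ˢ P.divisors).filter
          (fun k => k.1 * k.2 ∣ P ∧ Nat.Coprime k.1 k.2 ∧
            x ^ (θ / 2) < ((k.1 * k.2 : ℕ) : ℝ)),
        f k.1 * f k.2 * ∏ p ∈ (P / (k.1 * k.2)).primeFactors, (1 - 2 * f p)
      ≤ C * Real.exp (-(θ / 6) * (Real.log x / Real.log y) *
          Real.log (Real.log x / Real.log y)) :=
  stmt10_general θ hθ0
end
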